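/- Let (L,[·,·],α) be a Hom-Lie superalgebra with an even derivation d (i.e. d([x,y]) = [d(x),y] + [x,d(y)]) such that dα = αd. Define x⋆'y = [x,d(y)]. Then (L, [·,·], ⋆', α) is a super Hom-Gel'fand-Dorfman bialgebra if and only if, for all homogeneous x,y,z ∈ L: [d([x,y]), d(α(z))] − [α(x), d([y,d(z)])] + (−1)^{|x||y|}[α(y), d([x,d(z)])] = 0, and [d(x),d(y)] ∈ Z(α(L)). -/

import Mathlib

noncomputable section

/-- The sign `(-1)^{|x||y|}` attached to parities `i, j` in `ℤ₂`. -/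
def sg (i j : ZMod 2) : ℂ := (-1 : ℂ) ^ (i.val * j.val)

variable {A : Type*} [AddCommGroup A] [Module ℂ A]

/-- `gr` makes `A` into a superspace: `A = A₀ ⊕ A₁`. -/
def IsSupergrading (gr : ZMod 2 → Submodule ℂ A) : Prop :=
  (∀ x : A, ∃ x0 ∈ gr 0, ∃ x1 ∈ gr 1, x = x0 + x1) ∧ (gr 0 ⊓ gr 1 = ⊥)

/-- An even linear map: it preserves the grading. -/
def EvenLin (gr : ZMod 2 → Submodule ℂ A) (α : A →ₗ[ℂ] A) : Prop :=
  ∀ i : ZMod 2, ∀ x ∈ gr i, α x ∈ gr i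

/-- An even bilinear map: it adds parities. -/
def EvenBilin (gr : ZMod 2 → Submodule ℂ A) (m : A →ₗ[ℂ] A →ₗ[ℂ] A) : Prop :=
  ∀ i j : ZMod 2, ∀ x ∈ gr i, ∀ y ∈ gr j, m x y ∈ gr (i + j)

/-- A Hom-Lie superalgebra structure on the superspace `(A, gr)`. -/
def HomLieSuper (gr : ZMod 2 → Submodule ℂ A) (br : A →ₗ[ℂ] A →ₗ[ℂ] A)
    (α : A →ₗ[ℂ] A) : Prop :=
  EvenLin gr α ∧ EvenBilin gr br ∧
  (∀ (i j : ZMod 2), ∀ x ∈ gr i, ∀ y ∈ gr j, br x y = -(sg i j • br y x)) ∧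
  (∀ (i j k : ZMod 2), ∀ x ∈ gr i, ∀ y ∈ gr j, ∀ z ∈ gr k,
    sg i k • br (br x y) (α z) + sg i j • br (br y z) (α x)
      + sg j k • br (br z x) (α y) = 0)

/-- A Hom-Novikov superalgebra structure on the superspace `(A, gr)`. -/
def HomNovikovSuper (gr : ZMod 2 → Submodule ℂ A) (c : A →ₗ[ℂ] A →ₗ[ℂ] A)
    (α : A →ₗ[ℂ] A) : Prop :=
  EvenLin gr α ∧ EvenBilin gr c ∧
  (∀ (i j k : ZMod 2), ∀ x ∈ gr i, ∀ y ∈ gr j, ∀ z ∈ gr k,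
    c (c x y) (α z) - c (α x) (c y z) = sg i j • (c (c y x) (α z) - c (α y) (c x z))) ∧
  (∀ (i j k : ZMod 2), ∀ x ∈ gr i, ∀ y ∈ gr j, ∀ z ∈ gr k,
    c (c x y) (α z) = sg j k • c (c x z) (α y))

/-- A super Hom-Gel'fand-Dorfman bialgebra structure on the superspace `(A, gr)`. -/
def SuperHomGD (gr : ZMod 2 → Submodule ℂ A) (br c : A →ₗ[ℂ] A →ₗ[ℂ] A)
    (α : A →ₗ[ℂ] A) : Prop :=
  HomLieSuper gr br α ∧ HomNovikovSuper gr c α ∧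
  (∀ (i j k : ZMod 2), ∀ x ∈ gr i, ∀ y ∈ gr j, ∀ z ∈ gr k,
    br (c x y) (α z) - sg j k • br (c x z) (α y) + c (br x y) (α z)
      - sg j k • c (br x z) (α y) - c (α x) (br y z) = 0)

/-- A Lie superalgebra structure on the superspace `(A, gr)`. -/
def LieSuper (gr : ZMod 2 → Submodule ℂ A) (br : A →ₗ[ℂ] A →ₗ[ℂ] A) : Prop :=
  EvenBilin gr br ∧
  (∀ (i j : ZMod 2), ∀ x ∈ gr i, ∀ y ∈ gr j, br x y = -(sg i j • br y x)) ∧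
  (∀ (i j k : ZMod 2), ∀ x ∈ gr i, ∀ y ∈ gr j, ∀ z ∈ gr k,
    sg i k • br (br x y) z + sg i j • br (br y z) x + sg j k • br (br z x) y = 0)

/-- A Novikov superalgebra structure on the superspace `(A, gr)`. -/
def NovikovSuper (gr : ZMod 2 → Submodule ℂ A) (c : A →ₗ[ℂ] A →ₗ[ℂ] A) : Prop :=
  EvenBilin gr c ∧
  (∀ (i j k : ZMod 2), ∀ x ∈ gr i, ∀ y ∈ gr j, ∀ z ∈ gr k,
    c (c x y) z - c x (c y z) = sg i j • (c (c y x) z - c y (c x z))) ∧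
  (∀ (i j k : ZMod 2), ∀ x ∈ gr i, ∀ y ∈ gr j, ∀ z ∈ gr k,
    c (c x y) z = sg j k • c (c x z) y)

/-- A super Gel'fand-Dorfman bialgebra structure on the superspace `(A, gr)`. -/
def SuperGD (gr : ZMod 2 → Submodule ℂ A) (br c : A →ₗ[ℂ] A →ₗ[ℂ] A) : Prop :=
  LieSuper gr br ∧ NovikovSuper gr c ∧
  (∀ (i j k : ZMod 2), ∀ x ∈ gr i, ∀ y ∈ gr j, ∀ z ∈ gr k,
    br (c x y) z - sg j k • br (c x z) y + c (br x y) z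
      - sg j k • c (br x z) y - c x (br y z) = 0)

/-! With `x ⋆' y = [x, d y]`, both Novikov identities and the compatibility condition are
instances of the Hom-Leibniz form `[[x,y],αz] - (-1)^{|y||z|}[[x,z],αy] = [αx,[y,z]]` of the
Hom-Jacobi identity. The compatibility condition therefore holds for every even derivation
commuting with `α`; right commutativity of `⋆'` says `[αx,[dy,dz]] = 0`, i.e.
`[dy,dz] ∈ Z(α(L))`; and expanding `d[x,y]` by the Leibniz rule turns left symmetry of `⋆'`
into the first displayed identity. -/

theorem sg_comm (i j : ZMod 2) : sg i j = sg j i := by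
  rw [sg, sg, mul_comm]

theorem sg_add_left (i j k : ZMod 2) : sg (i + j) k = sg i k * sg j k := by
  simp only [sg, ← pow_add, ← add_mul]
  rw [neg_one_pow_eq_pow_mod_two, neg_one_pow_eq_pow_mod_two (n := _ * _), ZMod.val_add]
  simp [Nat.mul_mod, Nat.add_mod]

theorem sg_mul_self (i j : ZMod 2) : sg i j * sg i j = 1 := by
  rw [sg, ← mul_pow, neg_one_mul, neg_neg, one_pow]

theorem IsSupergrading.eq_zero_of_forall_homogeneous {M : Type*} [AddCommGroup M] [Module ℂ M]
    {gr : ZMod 2 → Submodule ℂ A} (hgr : IsSupergrading gr) {f : A →ₗ[ℂ] M}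
    (hf : ∀ p, ∀ u ∈ gr p, f u = 0) (w : A) : f w = 0 := by
  obtain ⟨w₀, hw₀, w₁, hw₁, rfl⟩ := hgr.1 w
  rw [map_add, hf 0 w₀ hw₀, hf 1 w₁ hw₁, add_zero]

namespace HomLieSuper

variable {gr : ZMod 2 → Submodule ℂ A} {br : A →ₗ[ℂ] A →ₗ[ℂ] A} {α : A →ₗ[ℂ] A}
  {i j k : ZMod 2} {x y z : A}

theorem br_skew (hL : HomLieSuper gr br α) (hx : x ∈ gr i) (hy : y ∈ gr j) :
    br x y = -(sg i j • br y x) :=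
  hL.2.2.1 i j x hx y hy

theorem leibniz (hL : HomLieSuper gr br α) (hx : x ∈ gr i) (hy : y ∈ gr j) (hz : z ∈ gr k) :
    br (br x y) (α z) - sg j k • br (br x z) (α y) = br (α x) (br y z) := by
  have jacobi := hL.2.2.2 i j k x hx y hy z hz
  rw [hL.br_skew (hL.2.1 j k y hy z hz) (hL.1 i x hx), hL.br_skew hz hx] at jacobi
  simp only [map_neg, map_smul, LinearMap.neg_apply, LinearMap.smul_apply, sg_add_left,
    sg_comm k i, sg_comm j i] at jacobi
  -- multiply the Hom-Jacobi identity by `(-1)^{|x||z|}`; every sign squares to `1`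
  linear_combination (norm := module) sg i k • jacobi + (sg_mul_self i j) • br (α x) (br y z)
    + (sg_mul_self i k) • (sg i j ^ 2 • br (α x) (br y z) + sg j k • br (br x z) (α y)
      - br (br x y) (α z))

theorem forall_br_alpha_eq_zero_iff (hL : HomLieSuper gr br α) (hgr : IsSupergrading gr)
    {u : A} (hu : u ∈ gr k) :
    (∀ p, ∀ x ∈ gr p, br (α x) u = 0) ↔ ∀ w, br u (α w) = 0 := by
  constructor
  · intro h
    refine hgr.eq_zero_of_forall_homogeneous (f := br u ∘ₗ α) fun p x hx => ?_
    rw [LinearMap.comp_apply, hL.br_skew hu (hL.1 p x hx), h p x hx, smul_zero, neg_zero]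
  · intro h p x hx
    rw [hL.br_skew (hL.1 p x hx) hu, h x, smul_zero, neg_zero]

variable {d : A →ₗ[ℂ] A}

theorem leftSymm_compl₂_eq (hL : HomLieSuper gr br α) (hdeven : EvenLin gr d)
    (hder : ∀ x y, d (br x y) = br (d x) y + br x (d y)) (hx : x ∈ gr i) (hy : y ∈ gr j) :
    br (d (br x y)) (d (α z)) - br (α x) (d (br y (d z)))
        + sg i j • br (α y) (d (br x (d z)))
      = br.compl₂ d (br.compl₂ d x y) (α z) - br.compl₂ d (α x) (br.compl₂ d y z)
        - sg i j • (br.compl₂ d (br.compl₂ d y x) (α z)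
          - br.compl₂ d (α y) (br.compl₂ d x z)) := by
  simp only [LinearMap.compl₂_apply]
  rw [hder, hL.br_skew (hdeven i x hx) hy]
  simp only [map_add, map_neg, map_smul, LinearMap.add_apply, LinearMap.neg_apply,
    LinearMap.smul_apply]
  module

theorem rightComm_compl₂_eq (hL : HomLieSuper gr br α) (hdeven : EvenLin gr d)
    (hdα : ∀ x, d (α x) = α (d x)) (hx : x ∈ gr i) (hy : y ∈ gr j) (hz : z ∈ gr k) :
    br.compl₂ d (br.compl₂ d x y) (α z) - sg j k • br.compl₂ d (br.compl₂ d x z) (α y)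
      = br (α x) (br (d y) (d z)) := by
  simp only [LinearMap.compl₂_apply, hdα]
  exact hL.leibniz hx (hdeven j y hy) (hdeven k z hz)

theorem compatibility_compl₂ (hL : HomLieSuper gr br α) (hdeven : EvenLin gr d)
    (hder : ∀ x y, d (br x y) = br (d x) y + br x (d y)) (hdα : ∀ x, d (α x) = α (d x))
    (hx : x ∈ gr i) (hy : y ∈ gr j) (hz : z ∈ gr k) :
    br (br.compl₂ d x y) (α z) - sg j k • br (br.compl₂ d x z) (α y)
      + br.compl₂ d (br x y) (α z) - sg j k • br.compl₂ d (br x z) (α y)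
      - br.compl₂ d (α x) (br y z) = 0 := by
  simp only [LinearMap.compl₂_apply, hdα, hder y z, map_add]
  linear_combination (norm := module)
    hL.leibniz hx (hdeven j y hy) hz + hL.leibniz hx hy (hdeven k z hz)

theorem homNovikovSuper_compl₂_iff (hL : HomLieSuper gr br α) (hgr : IsSupergrading gr)
    (hdeven : EvenLin gr d) (hder : ∀ x y, d (br x y) = br (d x) y + br x (d y))
    (hdα : ∀ x, d (α x) = α (d x)) :
    HomNovikovSuper gr (br.compl₂ d) α ↔
      ((∀ (i j k : ZMod 2), ∀ x ∈ gr i, ∀ y ∈ gr j, ∀ z ∈ gr k,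
          br (d (br x y)) (d (α z)) - br (α x) (d (br y (d z)))
            + sg i j • br (α y) (d (br x (d z))) = 0) ∧
       (∀ (i j : ZMod 2), ∀ x ∈ gr i, ∀ y ∈ gr j, ∀ w : A,
          br (br (d x) (d y)) (α w) = 0)) := by
  have evenBilin : EvenBilin gr (br.compl₂ d) := fun i j x hx y hy =>
    hL.2.1 i j x hx (d y) (hdeven j y hy)
  have hdd : ∀ {j k y z}, y ∈ gr j → z ∈ gr k → br (d y) (d z) ∈ gr (j + k) :=
    fun hy hz => hL.2.1 _ _ _ (hdeven _ _ hy) _ (hdeven _ _ hz)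
  rw [HomNovikovSuper, and_iff_right hL.1, and_iff_right evenBilin]
  refine and_congr ⟨fun h i j k x hx y hy z hz => ?_, fun h i j k x hx y hy z hz => ?_⟩
    ⟨fun h j k y hy z hz => ?_, fun h i j k x hx y hy z hz => ?_⟩
  · rw [hL.leftSymm_compl₂_eq hdeven hder hx hy, h i j k x hx y hy z hz, sub_self]
  · rw [← sub_eq_zero, ← hL.leftSymm_compl₂_eq hdeven hder hx hy]
    exact h i j k x hx y hy z hz
  · refine (hL.forall_br_alpha_eq_zero_iff hgr (hdd hy hz)).1 fun i x hx => ?_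
    rw [← hL.rightComm_compl₂_eq hdeven hdα hx hy hz, h i j k x hx y hy z hz, sub_self]
  · rw [← sub_eq_zero, hL.rightComm_compl₂_eq hdeven hdα hx hy hz]
    exact (hL.forall_br_alpha_eq_zero_iff hgr (hdd hy hz)).2 (h j k y hy z hz) i x hx

end HomLieSuper

/-- For a Hom-Lie superalgebra `(L, [·,·], α)` with an even derivation
`d` commuting with `α`, and `x⋆'y = [x, d(y)]`, the tuple `(L, [·,·], ⋆', α)` is a super
Hom-Gel'fand-Dorfman bialgebra iff for all homogeneous `x,y,z`:
`[d([x,y]), d(α(z))] − [α(x), d([y,d(z)])] + (−1)^{|x||y|}[α(y), d([x,d(z)])] = 0`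
and `[d(x),d(y)] ∈ Z(α(L))`. -/
theorem superHomGD_star'_derivation_iff
    {L : Type*} [AddCommGroup L] [Module ℂ L]
    (gr : ZMod 2 → Submodule ℂ L) (hgr : IsSupergrading gr)
    (br : L →ₗ[ℂ] L →ₗ[ℂ] L) (α : L →ₗ[ℂ] L)
    (hL : HomLieSuper gr br α)
    (d : L →ₗ[ℂ] L) (hdeven : EvenLin gr d)
    (hder : ∀ x y : L, d (br x y) = br (d x) y + br x (d y))
    (hdα : ∀ x : L, d (α x) = α (d x)) :
    SuperHomGD gr br (br.compl₂ d) α ↔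
      ((∀ (i j k : ZMod 2), ∀ x ∈ gr i, ∀ y ∈ gr j, ∀ z ∈ gr k,
          br (d (br x y)) (d (α z)) - br (α x) (d (br y (d z)))
            + sg i j • br (α y) (d (br x (d z))) = 0) ∧
       (∀ (i j : ZMod 2), ∀ x ∈ gr i, ∀ y ∈ gr j, ∀ w : L,
          br (br (d x) (d y)) (α w) = 0)) := by
  rw [← hL.homNovikovSuper_compl₂_iff hgr hdeven hder hdα]
  exact ⟨fun h => h.2.1, fun h => ⟨hL, h, fun i j k x hx y hy z hz =>
    hL.compatibility_compl₂ hdeven hder hdα hx hy hz⟩⟩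

end
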